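/- arXiv:2002.01773 — 3 statements merged into one kernel-verified Lean document; each statement's English description precedes it below -/
import Mathlib

section
/- In a finite group G, if the proportion of elements x with x^2 = 1 is strictly greater than 3/4, then G is Abelian. -/
/-!
For an element `a` with `a ^ 2 = 1`, the square roots of unity `I` and the translate `a • I` each
fill more than three quarters of `G`, so they overlap in more than half of `G`. An element `a * t`
of the overlap is a product of two elements of order dividing two whose product again squares to
one, so `a` and `t` commute, and hence `a` commutes with `a * t`. Thus the centralizer of `a` has
more than `|G| / 2` elements, so it is all of `G` by Lagrange. Hence `I` lies in the centre, which
then has more than half the elements of `G`, so it is `G`.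
-/

theorem Set.ncard_add_ncard_le_card_add_ncard_inter {α : Type*} [Finite α] (s t : Set α) :
    s.ncard + t.ncard ≤ Nat.card α + (s ∩ t).ncard := by
  rw [← Set.ncard_inter_add_ncard_union, add_comm]
  gcongr
  exact Set.ncard_le_card _

theorem Subgroup.eq_top_of_card_lt_two_mul {G : Type*} [Group G] [Finite G] (H : Subgroup G)
    (h : Nat.card G < 2 * Nat.card H) : H = ⊤ :=
  H.eq_top_of_card_eq
    (Nat.eq_of_dvd_of_lt_two_mul Nat.card_pos.ne' H.card_subgroup_dvd_card h).symm

theorem Commute.of_sq_eq_one {G : Type*} [Group G] {a b : G} (ha : a ^ 2 = 1) (hb : b ^ 2 = 1)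
    (hab : (a * b) ^ 2 = 1) : Commute a b := by
  have inv_eq_self {x : G} (hx : x ^ 2 = 1) : x⁻¹ = x :=
    inv_eq_of_mul_eq_one_right (by rwa [← sq])
  calc a * b = (a * b)⁻¹ := (inv_eq_self hab).symm
    _ = b * a := by rw [mul_inv_rev, inv_eq_self ha, inv_eq_self hb]

section SquareRootsOfUnity

open scoped Pointwise

variable {G : Type*} [Group G]

theorem sq_eq_one_inter_smul_subset_centralizer {a : G} (ha : a ^ 2 = 1) :
    {x : G | x ^ 2 = 1} ∩ a • {x : G | x ^ 2 = 1} ⊆ Subgroup.centralizer {a} := by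
  rintro _ ⟨hat, t, ht, rfl⟩
  rw [SetLike.mem_coe, Subgroup.mem_centralizer_singleton_iff]
  exact ((Commute.refl a).mul_right (Commute.of_sq_eq_one ha ht hat)).symm

theorem mem_center_of_sq_eq_one [Finite G]
    (h : 3 * Nat.card G < 4 * {x : G | x ^ 2 = 1}.ncard) {a : G} (ha : a ^ 2 = 1) :
    a ∈ Subgroup.center G := by
  have hoverlap := Set.ncard_add_ncard_le_card_add_ncard_inter {x : G | x ^ 2 = 1}
    (a • {x : G | x ^ 2 = 1})
  rw [Set.ncard_smul_set] at hoverlap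
  have hcentralizer := Set.ncard_le_ncard (sq_eq_one_inter_smul_subset_centralizer ha)
  have htop : Subgroup.centralizer {a} = ⊤ :=
    Subgroup.eq_top_of_card_lt_two_mul _ <| by
      rw [← SetLike.coe_sort_coe, Nat.card_coe_set_eq]; omega
  exact Subgroup.centralizer_eq_top_iff_subset.mp htop rfl

end SquareRootsOfUnity

theorem stmt_1 {G : Type*} [Group G] [Finite G]
    (h : 3 * Nat.card G < 4 * Nat.card {x : G // x ^ 2 = 1}) :
    ∀ x y : G, x * y = y * x := by
  have hI : 3 * Nat.card G < 4 * {x : G | x ^ 2 = 1}.ncard := by rwa [← Nat.card_coe_set_eq]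
  have hcenter := Set.ncard_le_ncard (s := {x : G | x ^ 2 = 1}) (t := Subgroup.center G)
    fun _ ↦ mem_center_of_sq_eq_one hI
  have htop : Subgroup.center G = ⊤ :=
    Subgroup.eq_top_of_card_lt_two_mul _ <| by
      rw [← SetLike.coe_sort_coe, Nat.card_coe_set_eq]; omega
  intro x y
  exact (Subgroup.mem_center_iff.mp (htop ▸ Subgroup.mem_top x) y).symm
end

section
/- For every finite group G, either x·y^2 = y^2·x holds for all x, y ∈ G, or the proportion of pairs (x,y) ∈ G^2 with x·y^2 = y^2·x is at most 7/8. -/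
/-! Let `K` be the set of `y` with `y ^ 2` central. The pairs `(x, y)` counted are those with
`x` in the centralizer of `y ^ 2`, so each `y ∈ K` contributes `|G|` pairs and each `y ∉ K`
at most `|G| / 2`. It remains to see that `|K| ≤ 3|G|/4` unless `K = G`.

Now `K` is the preimage of `{q | q ^ 2 = 1}` in `G ⧸ center G`. If more than three quarters of a
finite group `Q` square to `1`, then for each `g` more than half of `Q` consists of elements
`k` with `k ^ 2 = (g * k) ^ 2 = 1`, all of which invert `g` by conjugation. Such a large set
contains `a`, `b` and `a * b`; then `a * b` inverts `g` and, as a product of two inverting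
elements, also centralizes it, so `g = g⁻¹`. -/

open Finset Pointwise

section Involutions

variable {Q : Type*} [Group Q]

theorem conj_eq_inv_of_sq_eq_one {g k : Q} (hk : k ^ 2 = 1) (hgk : (g * k) ^ 2 = 1) :
    k * g * k⁻¹ = g⁻¹ := by
  have hk' : k⁻¹ = k := inv_eq_of_mul_eq_one_right (by rw [← pow_two, hk])
  rw [hk', eq_inv_iff_mul_eq_one]
  calc k * g * k * g = g⁻¹ * ((g * k) * (g * k)) * g := by group
    _ = 1 := by rw [← pow_two, hgk]; group

theorem sq_eq_one_of_conj_eq_inv {g a b : Q} (ha : a * g * a⁻¹ = g⁻¹) (hb : b * g * b⁻¹ = g⁻¹)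
    (hab : a * b * g * (a * b)⁻¹ = g⁻¹) : g ^ 2 = 1 := by
  rw [pow_two, mul_eq_one_iff_eq_inv]
  calc g = (a * g * a⁻¹)⁻¹ := by rw [ha, inv_inv]
    _ = a * (b * g * b⁻¹) * a⁻¹ := by rw [hb]; group
    _ = g⁻¹ := by rw [← hab]; group

theorem two_mul_card_le_card_inter_smul_finset_add [Fintype Q] [DecidableEq Q]
    (s : Finset Q) (a : Q) : 2 * #s ≤ #(s ∩ a • s) + Fintype.card Q := by
  have := card_inter_add_card_union s (a • s)
  rw [card_smul_finset] at this
  have := card_le_univ (s ∪ a • s)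
  omega

theorem sq_eq_one_of_three_mul_card_lt [Fintype Q] [DecidableEq Q]
    (h : 3 * Fintype.card Q < 4 * #{q : Q | q ^ 2 = 1}) (g : Q) : g ^ 2 = 1 := by
  set S : Finset Q := {q : Q | q ^ 2 = 1}
  set A := S ∩ g⁻¹ • S
  have conj_of_mem_A : ∀ k ∈ A, k * g * k⁻¹ = g⁻¹ := by
    intro k hk
    rw [mem_inter, mem_inv_smul_finset_iff] at hk
    exact conj_eq_inv_of_sq_eq_one (mem_filter.mp hk.1).2 (mem_filter.mp hk.2).2
  have hA : Fintype.card Q < 2 * #A := by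
    have : 2 * #S ≤ #A + Fintype.card Q := two_mul_card_le_card_inter_smul_finset_add S g⁻¹
    omega
  obtain ⟨a, ha⟩ : A.Nonempty := card_pos.mp (by omega)
  have hAa : 2 * #A ≤ #(A ∩ a • A) + Fintype.card Q :=
    two_mul_card_le_card_inter_smul_finset_add A a
  obtain ⟨c, hc⟩ : (A ∩ a • A).Nonempty := card_pos.mp (by omega)
  obtain ⟨hcA, hca⟩ := mem_inter.mp hc
  obtain ⟨b, hb, rfl⟩ := mem_smul_finset.mp hca
  exact sq_eq_one_of_conj_eq_inv (conj_of_mem_A a ha) (conj_of_mem_A b hb) (conj_of_mem_A _ hcA)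

theorem forall_sq_eq_one_or_four_mul_card_le [Finite Q] :
    (∀ q : Q, q ^ 2 = 1) ∨ 4 * Nat.card {q : Q | q ^ 2 = 1} ≤ 3 * Nat.card Q := by
  classical
  cases nonempty_fintype Q
  rw [or_iff_not_imp_right, not_le, Nat.card_eq_fintype_card (α := Q), Nat.card_eq_card_toFinset,
    Set.toFinset_ofPred]
  exact sq_eq_one_of_three_mul_card_lt

end Involutions

theorem Subgroup.two_mul_card_le_of_ne_top {G : Type*} [Group G] [Finite G] {H : Subgroup G}
    (hH : H ≠ ⊤) : 2 * Nat.card H ≤ Nat.card G := by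
  rw [← H.card_mul_index, mul_comm]
  exact Nat.mul_le_mul_left _ (H.one_lt_index_of_ne_top hH)

section SquaresInCenter

open Subgroup

variable {G : Type*} [Group G]

theorem forall_sq_mem_center_or_four_mul_card_le [Finite G] :
    (∀ y : G, y ^ 2 ∈ center G) ∨
      4 * Nat.card {y : G | y ^ 2 ∈ center G} ≤ 3 * Nat.card G := by
  have hpre : {y : G | y ^ 2 ∈ center G} =
      QuotientGroup.mk ⁻¹' {q : G ⧸ center G | q ^ 2 = 1} := by
    ext y
    exact (QuotientGroup.eq_one_iff (N := center G) _).symm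
  refine (forall_sq_eq_one_or_four_mul_card_le (Q := G ⧸ center G)).imp
    (fun h y => (QuotientGroup.eq_one_iff (N := center G) _).mp (h y)) (fun h => ?_)
  rw [hpre, QuotientGroup.card_preimage_mk, (center G).card_eq_card_quotient_mul_card_subgroup]
  nlinarith

theorem two_mul_card_centralizer_sq_le [Finite G] (y : G) [Decidable (y ^ 2 ∈ center G)] :
    2 * Nat.card (centralizer {y ^ 2}) ≤
      Nat.card G + if y ^ 2 ∈ center G then Nat.card G else 0 := by
  split_ifs with hy
  · have := card_le_card_group (centralizer {y ^ 2})
    omega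
  · have hne : centralizer {y ^ 2} ≠ ⊤ := by
      rwa [Ne, centralizer_eq_top_iff_subset, Set.singleton_subset_iff]
    simpa using two_mul_card_le_of_ne_top hne

variable [Fintype G]

theorem card_commute_sq_eq_sum_card_centralizer :
    Nat.card {p : G × G // p.1 * p.2 ^ 2 = p.2 ^ 2 * p.1} =
      ∑ y : G, Nat.card (centralizer {y ^ 2}) := by
  rw [← Nat.card_sigma]
  exact Nat.card_congr <| ((Equiv.prodComm G G).subtypeEquiv
    fun p => mem_centralizer_singleton_iff.symm).trans
      (Equiv.subtypeProdEquivSigmaSubtype fun y x => x ∈ centralizer {y ^ 2})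

theorem two_mul_card_commute_sq_le :
    2 * Nat.card {p : G × G // p.1 * p.2 ^ 2 = p.2 ^ 2 * p.1} ≤
      Nat.card G * (Nat.card G + Nat.card {y : G | y ^ 2 ∈ center G}) := by
  classical
  rw [card_commute_sq_eq_sum_card_centralizer, mul_sum]
  calc _ ≤ ∑ y : G, (Nat.card G + if y ^ 2 ∈ center G then Nat.card G else 0) :=
        sum_le_sum fun y _ => two_mul_card_centralizer_sq_le y
    _ = _ := by
      rw [sum_add_distrib, ← sum_filter, sum_const, sum_const, Nat.card_eq_card_toFinset,
        Set.toFinset_ofPred, card_univ, Nat.card_eq_fintype_card, smul_eq_mul, smul_eq_mul]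
      ring

end SquaresInCenter

theorem stmt_6 {G : Type*} [Group G] [Finite G] :
    (∀ x y : G, x * y ^ 2 = y ^ 2 * x) ∨
    8 * Nat.card {p : G × G // p.1 * p.2 ^ 2 = p.2 ^ 2 * p.1} ≤ 7 * Nat.card (G × G) := by
  cases nonempty_fintype G
  refine forall_sq_mem_center_or_four_mul_card_le.imp
    (fun h x y => Subgroup.mem_center_iff.mp (h y) x) (fun h => ?_)
  have := two_mul_card_commute_sq_le (G := G)
  rw [Nat.card_prod]
  nlinarith
end

section
/- For every finite group G, either xy = yx^{-1} holds for all pairs (x,y) ∈ G^2, or the proportion of pairs (x,y) with xy = yx^{-1} is at most 5/8. -/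
open Subgroup

/-!
For fixed `x`, the solutions `y` of `x * y = y * x⁻¹` are empty or a right coset of the
centralizer of `x`, so such pairs are at most as many as commuting pairs. For non-abelian `G` this
gives the bound by Gustafson's argument: noncentral elements have centralizers of index at least
`2`, and the center has index at least `4` because a cyclic central quotient forces commutativity.
For abelian `G` the equation says `x ^ 2 = 1`, and these `x` form a subgroup, proper unless
`x⁻¹ = x` for all `x`, in which case the identity holds everywhere.
-/

theorem card_subtype_prod_eq_sum {α β : Type*} [Fintype α] [Finite β] (r : α → β → Prop) :
    Nat.card {p : α × β // r p.1 p.2} = ∑ a, Nat.card {b // r a b} := by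
  rw [Nat.card_congr (Equiv.subtypeProdEquivSigmaSubtype r), Nat.card_sigma]

section

variable {G : Type*} [Group G]

theorem card_commute_eq_sum_card_centralizer [Fintype G] :
    Nat.card {p : G × G // Commute p.1 p.2} = ∑ x : G, Nat.card (centralizer {x}) := by
  rw [card_subtype_prod_eq_sum]
  refine Finset.sum_congr rfl fun x _ => Nat.card_congr (Equiv.subtypeEquivRight fun y => ?_)
  rw [mem_centralizer_singleton_iff]
  exact eq_comm

variable [Finite G]

theorem Subgroup.two_mul_card_le_card {H : Subgroup G} (hH : H ≠ ⊤) :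
    2 * Nat.card H ≤ Nat.card G := by
  rw [← H.index_mul_card]
  exact Nat.mul_le_mul_right _ (one_lt_index_of_ne_top hH)

theorem four_le_index_center (hG : ¬ IsMulCommutative G) : 4 ≤ (center G).index := by
  by_contra! hlt
  obtain ⟨p, hp, hdvd⟩ : ∃ p, p.Prime ∧ (center G).index ∣ p := by
    have := Nat.pos_of_ne_zero (center G).index_ne_zero_of_finite
    interval_cases (center G).index
    exacts [⟨2, Nat.prime_two, one_dvd 2⟩, ⟨2, Nat.prime_two, dvd_rfl⟩,
      ⟨3, Nat.prime_three, dvd_rfl⟩]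
  have : Fact p.Prime := ⟨hp⟩
  have : IsCyclic (G ⧸ center G) := isCyclic_of_card_dvd_prime ((center G).index_eq_card ▸ hdvd)
  exact hG (isMulCommutative_of_isCyclic_quotient_center_self G)

theorem two_mul_card_centralizer_le {x : G} (hx : x ∉ center G) :
    2 * Nat.card (centralizer {x}) ≤ Nat.card G :=
  two_mul_card_le_card <| by rwa [Ne, centralizer_eq_top_iff_subset, Set.singleton_subset_iff]

theorem eight_mul_card_commute_le (hG : ¬ IsMulCommutative G) :
    8 * Nat.card {p : G × G // Commute p.1 p.2} ≤ 5 * Nat.card G ^ 2 := by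
  classical
  have := Fintype.ofFinite G
  set n := Nat.card G with hn
  have hcentralizer (x : G) :
      2 * Nat.card (centralizer {x}) ≤ n + if x ∈ center G then n else 0 := by
    split_ifs with hx
    · have := (centralizer {x}).card_le_card_group
      omega
    · exact two_mul_card_centralizer_le hx
  have hcenter : ∑ x : G, (if x ∈ center G then n else 0) = Nat.card (center G) * n := by
    simp [Finset.sum_ite, Nat.card_eq_fintype_card, Fintype.card_subtype]
  have hsum : 2 * ∑ x : G, Nat.card (centralizer {x}) ≤ n * n + Nat.card (center G) * n := by
    calc 2 * ∑ x : G, Nat.card (centralizer {x})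
        ≤ ∑ x : G, (n + if x ∈ center G then n else 0) := by
          rw [Finset.mul_sum]
          exact Finset.sum_le_sum fun x _ => hcentralizer x
      _ = n * n + Nat.card (center G) * n := by
          rw [Finset.sum_add_distrib, hcenter, Finset.sum_const, Finset.card_univ, smul_eq_mul, hn,
            Nat.card_eq_fintype_card]
  have hindex : 4 * Nat.card (center G) ≤ n := by
    rw [hn, ← (center G).index_mul_card]
    exact Nat.mul_le_mul_right _ (four_le_index_center hG)
  rw [card_commute_eq_sum_card_centralizer]
  nlinarith

theorem card_mul_eq_mul_le_card_commute (x z : G) :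
    Nat.card {y : G // x * y = y * z} ≤ Nat.card {y : G // Commute x y} := by
  rcases isEmpty_or_nonempty {y : G // x * y = y * z} with _ | ⟨y₀, hy₀⟩
  · simp
  obtain rfl : z = y₀⁻¹ * x * y₀ := by
    rw [mul_assoc, hy₀, ← mul_assoc, inv_mul_cancel, one_mul]
  refine Nat.card_le_card_of_injective (fun y => ⟨y.1 * y₀⁻¹, ?_⟩) fun y y' h => ?_
  · calc x * (y.1 * y₀⁻¹) = x * y.1 * y₀⁻¹ := (mul_assoc ..).symm
      _ = y.1 * (y₀⁻¹ * x * y₀) * y₀⁻¹ := by rw [y.2]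
      _ = y.1 * y₀⁻¹ * x := by group
  · exact Subtype.ext (mul_right_cancel (congrArg Subtype.val h))

theorem card_prod_mul_eq_mul_le_card_commute (f : G → G) :
    Nat.card {p : G × G // p.1 * p.2 = p.2 * f p.1} ≤
      Nat.card {p : G × G // Commute p.1 p.2} := by
  have := Fintype.ofFinite G
  rw [card_subtype_prod_eq_sum fun x y : G => x * y = y * f x, card_subtype_prod_eq_sum]
  exact Finset.sum_le_sum fun x _ => card_mul_eq_mul_le_card_commute x (f x)

end

section

variable {G : Type*} [CommGroup G]

theorem card_mul_eq_mul_inv_eq_card_ker_mul :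
    Nat.card {p : G × G // p.1 * p.2 = p.2 * p.1⁻¹} =
      Nat.card (powMonoidHom 2 : G →* G).ker * Nat.card G := by
  rw [← Nat.card_prod]
  refine Nat.card_congr <|
    (Equiv.subtypeEquivRight fun p => ?_).trans Equiv.prodSubtypeFstEquivSubtypeProd
  rw [MonoidHom.mem_ker, powMonoidHom_apply, mul_comm p.1, mul_right_inj, eq_inv_iff_mul_eq_one,
    pow_two]

theorem two_mul_card_mul_eq_mul_inv_le [Finite G] (h : ∃ x : G, x * x ≠ 1) :
    2 * Nat.card {p : G × G // p.1 * p.2 = p.2 * p.1⁻¹} ≤ Nat.card (G × G) := by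
  obtain ⟨x, hx⟩ := h
  have hne : (powMonoidHom 2 : G →* G).ker ≠ ⊤ := by
    rw [Ne, eq_top_iff']
    push Not
    exact ⟨x, by simpa [pow_two] using hx⟩
  rw [card_mul_eq_mul_inv_eq_card_ker_mul, Nat.card_prod, ← mul_assoc]
  exact Nat.mul_le_mul_right _ (two_mul_card_le_card hne)

end

theorem stmt_15 {G : Type*} [Group G] [Finite G] :
    (∀ x y : G, x * y = y * x⁻¹) ∨
    8 * Nat.card {p : G × G // p.1 * p.2 = p.2 * p.1⁻¹} ≤ 5 * Nat.card (G × G) := by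
  by_cases hsq : ∀ x : G, x * x = 1
  · refine Or.inl fun x y => ?_
    rw [inv_eq_of_mul_eq_one_right (hsq x)]
    exact Commute.of_orderOf_dvd_two
      (fun g => orderOf_dvd_of_pow_eq_one (by rw [pow_two, hsq])) x y
  push Not at hsq
  right
  by_cases hG : IsMulCommutative G
  · let : CommGroup G := { mul_comm := mul_comm' }
    have := two_mul_card_mul_eq_mul_inv_le hsq
    omega
  · calc 8 * Nat.card {p : G × G // p.1 * p.2 = p.2 * p.1⁻¹}
        ≤ 8 * Nat.card {p : G × G // Commute p.1 p.2} :=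
          Nat.mul_le_mul_left _ (card_prod_mul_eq_mul_le_card_commute _)
      _ ≤ 5 * Nat.card G ^ 2 := eight_mul_card_commute_le hG
      _ = 5 * Nat.card (G × G) := by rw [Nat.card_prod, sq]
end
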